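/- Let 1 < α < ∞ and let ρ be a density matrix on ℂ^{d_A} ⊗ ℂ^{d_B} with marginals ρ_A, ρ_B. Then ‖ρ_A‖_α + ‖ρ_B‖_α = 1 + ‖ρ‖_α holds if and only if ρ_A is pure or ρ_B is pure (i.e. at least one of ρ_A, ρ_B has rank 1). -/

import Mathlib

noncomputable section
open scoped ComplexOrder Kronecker

/-- A density matrix: positive semidefinite with unit trace. -/
def IsDensityMatrix {ι : Type*} [Fintype ι] (ρ : Matrix ι ι ℂ) : Prop :=
  ρ.PosSemidef ∧ ρ.trace = 1

/-- Marginal on system `A` of a bipartite matrix. -/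
def margA {dA dB : ℕ} (ρ : Matrix (Fin dA × Fin dB) (Fin dA × Fin dB) ℂ) :
    Matrix (Fin dA) (Fin dA) ℂ :=
  fun a a' => ∑ b, ρ (a, b) (a', b)

/-- Marginal on system `B` of a bipartite matrix. -/
def margB {dA dB : ℕ} (ρ : Matrix (Fin dA × Fin dB) (Fin dA × Fin dB) ℂ) :
    Matrix (Fin dB) (Fin dB) ℂ :=
  fun b b' => ∑ a, ρ (a, b) (a, b')


/-- Schatten α-norm of a (Hermitian, PSD) matrix, via its eigenvalues. -/
def schattenNorm {ι : Type*} [Fintype ι] [DecidableEq ι] (α : ℝ)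
    (σ : Matrix ι ι ℂ) : ℝ :=
  if h : σ.IsHermitian then (∑ i, h.eigenvalues i ^ α) ^ (1 / α) else 0

/-- Operator (∞-Schatten) norm of a (Hermitian, PSD) matrix: its largest eigenvalue. -/
def schattenInftyNorm {ι : Type*} [Fintype ι] [DecidableEq ι]
    (σ : Matrix ι ι ℂ) : ℝ :=
  if h : σ.IsHermitian then ⨆ i, h.eigenvalues i else 0

/-!
Conjugating `ρ` by `U ⊗ V`, where `U` and `V` diagonalize the marginals, preserves the spectrum
of `ρ` and makes both marginals diagonal, with spectra `λ` and `μ`. The diagonal `r` of the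
conjugated state is a probability vector on `A × B` with marginals `λ`, `μ`, and
`‖r‖_α ≤ ‖ρ‖_α` because a diagonal is majorized by the spectrum (Schur). Let `s`, `t` be the
unit vectors of the dual exponent at which Hölder's inequality is sharp for `λ`, `μ`; since
`s, t ≤ 1` we have `s + t ≤ 1 + s t`, and Hölder bounds `∑ r s t` by `‖r‖_α`, so
`‖λ‖_α + ‖μ‖_α = ∑ r (s + t) ≤ 1 + ∑ r s t ≤ 1 + ‖ρ‖_α`.
Equality forces `r (1 - s) (1 - t) = 0`, hence some `s a = 1` or `t b = 1`, which happens only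
for a point mass. Conversely, if `λ` is the point mass at `a₀`, positivity forces the conjugated
state to be diagonal with entries `μ` on `{a₀} × B`, so `‖ρ‖_α = ‖μ‖_α` and `‖λ‖_α = 1`.
-/

open Matrix Finset

section NonnegVectors

variable {ι κ : Type*} [Fintype ι] [Fintype κ]

lemma eq_zero_of_apply_eq_sum {f : ι → ℝ} (hf : 0 ≤ f) {i j : ι} (h : f i = ∑ k, f k)
    (hji : j ≠ i) : f j = 0 :=
  ((hf j).eq_or_lt.resolve_right fun hpos =>
    (single_lt_sum hji (mem_univ i) (mem_univ j) hpos fun k _ _ => hf k).ne h).symm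

lemma card_ne_zero_eq_one_iff {f : ι → ℝ} (hf : 0 ≤ f) (h1 : ∑ i, f i = 1) :
    Fintype.card {i // f i ≠ 0} = 1 ↔ ∃ i, f i = 1 := by
  rw [Fintype.card_eq_one_iff]
  constructor
  · rintro ⟨⟨i, hi⟩, huniq⟩
    refine ⟨i, ?_⟩
    rw [← h1, Fintype.sum_eq_single i fun j hj => ?_]
    by_contra hj0
    exact hj (congrArg Subtype.val (huniq ⟨j, hj0⟩))
  · rintro ⟨i, hi⟩
    refine ⟨⟨i, by simp [hi]⟩, fun ⟨j, hj⟩ => Subtype.ext ?_⟩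
    by_contra hji
    exact hj (eq_zero_of_apply_eq_sum hf (hi.trans h1.symm) hji)

lemma sum_rpow_sum_mul_le {α : ℝ} (hα : 1 ≤ α) {w : ι → κ → ℝ} (hw : ∀ i k, 0 ≤ w i k)
    (hrow : ∀ i, ∑ k, w i k = 1) (hcol : ∀ k, ∑ i, w i k ≤ 1) {e : κ → ℝ} (he : 0 ≤ e) :
    ∑ i, (∑ k, w i k * e k) ^ α ≤ ∑ k, e k ^ α :=
  calc ∑ i, (∑ k, w i k * e k) ^ α
      ≤ ∑ i, ∑ k, w i k * e k ^ α := sum_le_sum fun i _ =>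
        Real.rpow_arith_mean_le_arith_mean_rpow _ _ _ (fun k _ => hw i k) (hrow i)
          (fun k _ => he k) hα
    _ = ∑ k, (∑ i, w i k) * e k ^ α := by rw [sum_comm]; simp_rw [sum_mul]
    _ ≤ ∑ k, e k ^ α := sum_le_sum fun k _ =>
        mul_le_of_le_one_left (Real.rpow_nonneg (he k) α) (hcol k)

end NonnegVectors

section RpowNorm

variable {ι : Type*} [Fintype ι] {α : ℝ} {f : ι → ℝ}

def rpowNorm (α : ℝ) (f : ι → ℝ) : ℝ := (∑ i, f i ^ α) ^ (1 / α)

lemma rpowNorm_nonneg (hf : 0 ≤ f) : 0 ≤ rpowNorm α f :=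
  Real.rpow_nonneg (sum_nonneg fun i _ => Real.rpow_nonneg (hf i) α) _

lemma rpowNorm_rpow (hf : 0 ≤ f) (hα : α ≠ 0) : rpowNorm α f ^ α = ∑ i, f i ^ α := by
  rw [rpowNorm, one_div, Real.rpow_inv_rpow (sum_nonneg fun i _ => Real.rpow_nonneg (hf i) α) hα]

lemma apply_le_rpowNorm (hf : 0 ≤ f) (hα : 0 < α) (i : ι) : f i ≤ rpowNorm α f := by
  rw [← Real.rpow_le_rpow_iff (hf i) (rpowNorm_nonneg hf) hα, rpowNorm_rpow hf hα.ne']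
  exact single_le_sum (fun j _ => Real.rpow_nonneg (hf j) α) (mem_univ i)

lemma rpowNorm_pos (hf : 0 ≤ f) (hf0 : f ≠ 0) (hα : 0 < α) : 0 < rpowNorm α f := by
  obtain ⟨i, hi⟩ := Function.ne_iff.mp hf0
  exact ((hf i).lt_of_ne' hi).trans_le (apply_le_rpowNorm hf hα i)

lemma eq_one_of_apply_eq_rpowNorm (hf : 0 ≤ f) (h1 : ∑ j, f j = 1) (hα : 0 < α) {i : ι}
    (hi : f i = rpowNorm α f) : f i = 1 := by
  have hpow : f i ^ α = ∑ j, f j ^ α := by rw [hi, rpowNorm_rpow hf hα.ne']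
  have hzero : ∀ j ≠ i, f j = 0 := fun j hj =>
    (Real.rpow_eq_zero (hf j) hα.ne').mp <|
      eq_zero_of_apply_eq_sum (fun k => Real.rpow_nonneg (hf k) α) hpow hj
  rw [← h1, Fintype.sum_eq_single i hzero]

/-- The Hölder dual of `f`: the unit vector for the conjugate exponent on which `f` attains its
norm. -/
def dualVector (α : ℝ) (f : ι → ℝ) : ι → ℝ := fun i => (f i / rpowNorm α f) ^ (α - 1)

lemma dualVector_nonneg (hf : 0 ≤ f) : 0 ≤ dualVector α f := fun i =>
  Real.rpow_nonneg (div_nonneg (hf i) (rpowNorm_nonneg hf)) _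

lemma dualVector_le_one (hf : 0 ≤ f) (hα : 1 ≤ α) (i : ι) : dualVector α f i ≤ 1 :=
  Real.rpow_le_one (div_nonneg (hf i) (rpowNorm_nonneg hf))
    (div_le_one_of_le₀ (apply_le_rpowNorm hf (by linarith) i) (rpowNorm_nonneg hf))
    (by linarith)

lemma sum_mul_dualVector (hf : 0 ≤ f) (hf0 : f ≠ 0) (hα : 1 < α) :
    ∑ i, f i * dualVector α f i = rpowNorm α f := by
  have hN := rpowNorm_pos hf hf0 (by linarith : 0 < α)
  have hterm : ∀ i, f i * dualVector α f i = f i ^ α / rpowNorm α f ^ (α - 1) := fun i => by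
    rw [dualVector, Real.div_rpow (hf i) hN.le, mul_div_assoc',
      ← Real.rpow_one_add' (hf i) (by linarith), add_sub_cancel]
  simp_rw [hterm, ← sum_div, ← rpowNorm_rpow hf (by linarith : α ≠ 0), ← Real.rpow_sub hN,
    sub_sub_cancel, Real.rpow_one]

lemma sum_dualVector_rpow_conjExponent (hf : 0 ≤ f) (hf0 : f ≠ 0) (hα : 1 < α) :
    ∑ i, dualVector α f i ^ α.conjExponent = 1 := by
  have hN := rpowNorm_pos hf hf0 (by linarith : 0 < α)
  simp_rw [dualVector, ← Real.rpow_mul (div_nonneg (hf _) hN.le),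
    (Real.HolderConjugate.conjExponent hα).sub_one_mul_conj, Real.div_rpow (hf _) hN.le,
    ← sum_div, ← rpowNorm_rpow hf (by linarith : α ≠ 0), div_self (Real.rpow_pos_of_pos hN α).ne']

lemma eq_one_of_dualVector_eq_one (hf : 0 ≤ f) (h1 : ∑ j, f j = 1) (hα : 1 < α) {i : ι}
    (hi : dualVector α f i = 1) : f i = 1 := by
  have hf0 : f ≠ 0 := by rintro rfl; simp at h1
  have hN := rpowNorm_pos hf hf0 (by linarith : 0 < α)
  have hratio : f i / rpowNorm α f = 1 :=
    (Real.rpow_left_inj (div_nonneg (hf i) hN.le) zero_le_one (by linarith)).mp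
      (hi.trans (Real.one_rpow _).symm)
  exact eq_one_of_apply_eq_rpowNorm hf h1 (by linarith) ((div_eq_one_iff_eq hN.ne').mp hratio)

end RpowNorm

section Marginals

variable {ι κ : Type*} [Fintype ι] [Fintype κ] {α : ℝ}

/-- The equality case of `rpowNorm α λ + rpowNorm α μ ≤ 1 + rpowNorm α r` for a probability
vector `r` on `ι × κ` with marginals `λ` and `μ`. -/
theorem exists_marginal_eq_one_of_one_add_rpowNorm_le (hα : 1 < α) {r : ι × κ → ℝ} (hr : 0 ≤ r)
    (hr1 : ∑ p, r p = 1)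
    (h : 1 + rpowNorm α r ≤
      rpowNorm α (fun i => ∑ j, r (i, j)) + rpowNorm α (fun j => ∑ i, r (i, j))) :
    (∃ i, ∑ j, r (i, j) = 1) ∨ ∃ j, ∑ i, r (i, j) = 1 := by
  set lam : ι → ℝ := fun i => ∑ j, r (i, j)
  set mu : κ → ℝ := fun j => ∑ i, r (i, j)
  have hlam : 0 ≤ lam := fun i => sum_nonneg fun j _ => hr _
  have hmu : 0 ≤ mu := fun j => sum_nonneg fun i _ => hr _
  have hlam1 : ∑ i, lam i = 1 := by rw [← hr1, Fintype.sum_prod_type]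
  have hmu1 : ∑ j, mu j = 1 := by rw [← hr1, Fintype.sum_prod_type_right]
  have hlam0 : lam ≠ 0 := by rintro h0; simp [h0] at hlam1
  have hmu0 : mu ≠ 0 := by rintro h0; simp [h0] at hmu1
  set s := dualVector α lam
  set t := dualVector α mu
  have hs := dualVector_nonneg (α := α) hlam
  have ht := dualVector_nonneg (α := α) hmu
  -- `r ⬝ (1 - s) ⊗ (1 - t) ≥ 0` measures the gap in Audenaert's inequality
  have hgap : ∑ p, r p * ((1 - s p.1) * (1 - t p.2)) =
      1 + ∑ p, r p * (s p.1 * t p.2) - (rpowNorm α lam + rpowNorm α mu) := by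
    have hrs : ∑ p, r p * s p.1 = rpowNorm α lam := by
      rw [← sum_mul_dualVector hlam hlam0 hα, Fintype.sum_prod_type]
      simp_rw [lam, sum_mul]
      rfl
    have hrt : ∑ p, r p * t p.2 = rpowNorm α mu := by
      rw [← sum_mul_dualVector hmu hmu0 hα, Fintype.sum_prod_type_right]
      simp_rw [mu, sum_mul]
      rfl
    calc ∑ p, r p * ((1 - s p.1) * (1 - t p.2))
        = ∑ p, (r p - r p * s p.1 - r p * t p.2 + r p * (s p.1 * t p.2)) :=
          sum_congr rfl fun p _ => by ring
      _ = _ := by rw [sum_add_distrib, sum_sub_distrib, sum_sub_distrib, hr1, hrs, hrt]; ring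
  have hholder : ∑ p, r p * (s p.1 * t p.2) ≤ rpowNorm α r := by
    have hst : ∑ p : ι × κ, |s p.1 * t p.2| ^ α.conjExponent = 1 := by
      have hprod : ∀ p : ι × κ, |s p.1 * t p.2| ^ α.conjExponent =
          s p.1 ^ α.conjExponent * t p.2 ^ α.conjExponent := fun p => by
        rw [abs_of_nonneg (mul_nonneg (hs _) (ht _)), Real.mul_rpow (hs _) (ht _)]
      have hsq : ∑ i, s i ^ α.conjExponent = 1 := sum_dualVector_rpow_conjExponent hlam hlam0 hα
      have htq : ∑ j, t j ^ α.conjExponent = 1 := sum_dualVector_rpow_conjExponent hmu hmu0 hα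
      simp_rw [hprod, Fintype.sum_prod_type, ← mul_sum, ← sum_mul, htq, hsq, one_mul]
    simpa only [rpowNorm, abs_of_nonneg (hr _), hst, Real.one_rpow, mul_one] using
      Real.inner_le_Lp_mul_Lq univ r (fun p => s p.1 * t p.2) (Real.HolderConjugate.conjExponent hα)
  have hterm_nonneg : ∀ p ∈ univ, 0 ≤ r p * ((1 - s p.1) * (1 - t p.2)) := fun p _ =>
    mul_nonneg (hr p) (mul_nonneg (sub_nonneg.2 (dualVector_le_one hlam hα.le _))
      (sub_nonneg.2 (dualVector_le_one hmu hα.le _)))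
  have hterm_zero := (sum_eq_zero_iff_of_nonneg hterm_nonneg).1
    (le_antisymm (by linarith) (sum_nonneg hterm_nonneg))
  obtain ⟨p, hp⟩ : ∃ p, r p ≠ 0 := by
    by_contra! h0
    simp [h0] at hr1
  rcases mul_eq_zero.1 ((mul_eq_zero.1 (hterm_zero p (mem_univ p))).resolve_left hp) with h | h
  · exact Or.inl ⟨p.1, eq_one_of_dualVector_eq_one hlam hlam1 hα (by linarith)⟩
  · exact Or.inr ⟨p.2, eq_one_of_dualVector_eq_one hmu hmu1 hα (by linarith)⟩

end Marginals

namespace Matrix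

variable {𝕜 : Type*} [RCLike 𝕜] {n : Type*} [Fintype n] [DecidableEq n]

lemma sum_norm_sq_apply_of_mem_unitaryGroup {U : Matrix n n 𝕜} (hU : U ∈ unitaryGroup n 𝕜)
    (i : n) : ∑ k, ‖U i k‖ ^ 2 = 1 := by
  have h := congrFun (congrFun (mem_unitaryGroup_iff.mp hU) i) i
  simp only [mul_apply, star_apply, RCLike.star_def, RCLike.mul_conj, one_apply_eq] at h
  exact_mod_cast h

lemma sum_norm_sq_apply_of_mem_unitaryGroup' {U : Matrix n n 𝕜} (hU : U ∈ unitaryGroup n 𝕜)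
    (k : n) : ∑ i, ‖U i k‖ ^ 2 = 1 := by
  simpa [star_apply] using sum_norm_sq_apply_of_mem_unitaryGroup (Unitary.star_mem hU) k

lemma re_mul_diagonal_mul_star_apply_self (U : Matrix n n 𝕜) (c : n → ℝ) (i : n) :
    RCLike.re ((U * diagonal (RCLike.ofReal ∘ c) * star U : Matrix n n 𝕜) i i) =
      ∑ k, ‖U i k‖ ^ 2 * c k := by
  rw [mul_apply, map_sum]
  simp only [mul_diagonal, star_apply, Function.comp_apply]
  refine sum_congr rfl fun k _ => ?_
  rw [mul_right_comm, RCLike.star_def, RCLike.mul_conj]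
  norm_cast

/-- Schur: the diagonal of a positive semidefinite matrix is majorized by its spectrum. -/
lemma PosSemidef.sum_re_diag_rpow_le {A : Matrix n n 𝕜} (hA : A.PosSemidef) {α : ℝ}
    (hα : 1 ≤ α) : ∑ i, RCLike.re (A i i) ^ α ≤ ∑ i, hA.1.eigenvalues i ^ α := by
  set U : Matrix n n 𝕜 := (hA.1.eigenvectorUnitary : Matrix n n 𝕜)
  have hspec : A = U * diagonal (RCLike.ofReal ∘ hA.1.eigenvalues) * star U :=
    hA.1.spectral_theorem
  have hdiag : ∀ i, RCLike.re (A i i) = ∑ k, ‖U i k‖ ^ 2 * hA.1.eigenvalues k := fun i =>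
    (congrArg (fun M : Matrix n n 𝕜 => RCLike.re (M i i)) hspec).trans
      (re_mul_diagonal_mul_star_apply_self U _ i)
  simp_rw [hdiag]
  exact sum_rpow_sum_mul_le hα (fun _ _ => sq_nonneg _)
    (sum_norm_sq_apply_of_mem_unitaryGroup hA.1.eigenvectorUnitary.2)
    (fun k => (sum_norm_sq_apply_of_mem_unitaryGroup' hA.1.eigenvectorUnitary.2 k).le)
    hA.eigenvalues_nonneg

lemma IsHermitian.sum_comp_eigenvalues {A : Matrix n n 𝕜} (hA : A.IsHermitian) (f : ℝ → ℝ) :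
    ∑ i, f (hA.eigenvalues i) = (A.charpoly.roots.map (f ∘ RCLike.re)).sum := by
  simp only [hA.roots_charpoly_eq_eigenvalues, Multiset.map_map, Function.comp_def,
    RCLike.ofReal_re]
  rfl

lemma roots_charpoly_diagonal {R : Type*} [CommRing R] [IsDomain R] (d : n → R) :
    (diagonal d).charpoly.roots = univ.val.map d := by
  rw [charpoly_diagonal, Polynomial.roots_prod]
  · simp
  · simp [Finset.prod_ne_zero_iff, Polynomial.X_sub_C_ne_zero]

lemma charpoly_star_mul_mul_of_mem_unitaryGroup {U : Matrix n n 𝕜} (hU : U ∈ unitaryGroup n 𝕜)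
    (A : Matrix n n 𝕜) : (star U * A * U).charpoly = A.charpoly := by
  rw [mul_assoc, charpoly_mul_comm, mul_assoc, mem_unitaryGroup_iff.mp hU, mul_one]

lemma PosSemidef.apply_eq_zero_of_apply_self_eq_zero {A : Matrix n n 𝕜} (hA : A.PosSemidef)
    {i : n} (hi : A i i = 0) (j : n) : A j i = 0 := by
  have h := (hA.dotProduct_mulVec_zero_iff (Pi.single i 1)).mp (by
    simpa [dotProduct, mulVec, Pi.single_apply] using hi)
  simpa [mulVec, dotProduct, Pi.single_apply] using congrFun h j

end Matrix

section Density

variable {n m : Type*} [Fintype n] [Fintype m]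

lemma IsDensityMatrix.submatrix_equiv {ρ : Matrix n n ℂ} (hρ : IsDensityMatrix ρ) (e : m ≃ n) :
    IsDensityMatrix (ρ.submatrix e e) :=
  ⟨hρ.1.submatrix e, hρ.2 ▸ e.sum_comp fun i => ρ i i⟩

variable [DecidableEq n] [DecidableEq m] {α : ℝ}

lemma schattenNorm_eq_rpowNorm {A : Matrix n n ℂ} (hA : A.IsHermitian) :
    schattenNorm α A = rpowNorm α hA.eigenvalues :=
  dif_pos hA

lemma schattenNorm_eq_of_charpoly_eq {A : Matrix n n ℂ} {B : Matrix m m ℂ} (hA : A.IsHermitian)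
    (hB : B.IsHermitian) (h : A.charpoly = B.charpoly) : schattenNorm α A = schattenNorm α B := by
  rw [schattenNorm_eq_rpowNorm hA, schattenNorm_eq_rpowNorm hB, rpowNorm, rpowNorm,
    hA.sum_comp_eigenvalues (· ^ α), hB.sum_comp_eigenvalues (· ^ α), h]

lemma schattenNorm_eq_rpowNorm_of_charpoly_eq_diagonal {A : Matrix n n ℂ} (hA : A.IsHermitian)
    {d : n → ℝ} (h : A.charpoly = (diagonal (RCLike.ofReal ∘ d)).charpoly) :
    schattenNorm α A = rpowNorm α d := by
  rw [schattenNorm_eq_rpowNorm hA, rpowNorm, rpowNorm, hA.sum_comp_eigenvalues (· ^ α), h,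
    roots_charpoly_diagonal, Multiset.map_map]
  simp only [Function.comp_def, RCLike.ofReal_re]
  rfl

lemma IsDensityMatrix.sum_eigenvalues {ρ : Matrix n n ℂ} (hρ : IsDensityMatrix ρ) :
    ∑ i, hρ.1.1.eigenvalues i = 1 := by
  have h := congrArg Complex.re hρ.2
  rw [hρ.1.1.trace_eq_sum_eigenvalues] at h
  simpa using h

lemma IsDensityMatrix.rank_eq_one_iff {ρ : Matrix n n ℂ} (hρ : IsDensityMatrix ρ) :
    ρ.rank = 1 ↔ ∃ i, hρ.1.1.eigenvalues i = 1 := by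
  rw [hρ.1.1.rank_eq_card_non_zero_eigs]
  exact card_ne_zero_eq_one_iff hρ.1.eigenvalues_nonneg hρ.sum_eigenvalues

end Density

section Bipartite

variable {dA dB : ℕ}

lemma margA_submatrix_swap (ρ : Matrix (Fin dA × Fin dB) (Fin dA × Fin dB) ℂ) :
    margA (ρ.submatrix Prod.swap Prod.swap) = margB ρ :=
  rfl

lemma margB_submatrix_swap (ρ : Matrix (Fin dA × Fin dB) (Fin dA × Fin dB) ℂ) :
    margB (ρ.submatrix Prod.swap Prod.swap) = margA ρ :=
  rfl

lemma isDensityMatrix_margA {ρ : Matrix (Fin dA × Fin dB) (Fin dA × Fin dB) ℂ}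
    (hρ : IsDensityMatrix ρ) : IsDensityMatrix (margA ρ) := by
  have hsum : margA ρ = ∑ b, ρ.submatrix (·, b) (·, b) := by
    ext a a'
    simp [margA, Matrix.sum_apply]
  refine ⟨hsum ▸ posSemidef_sum _ fun b _ => hρ.1.submatrix _, ?_⟩
  rw [← hρ.2, trace, trace, Fintype.sum_prod_type]
  rfl

lemma isDensityMatrix_margB {ρ : Matrix (Fin dA × Fin dB) (Fin dA × Fin dB) ℂ}
    (hρ : IsDensityMatrix ρ) : IsDensityMatrix (margB ρ) :=
  isDensityMatrix_margA (hρ.submatrix_equiv (Equiv.prodComm _ _))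

lemma margA_conj_kronecker (ρ : Matrix (Fin dA × Fin dB) (Fin dA × Fin dB) ℂ)
    (U : Matrix (Fin dA) (Fin dA) ℂ) {V : Matrix (Fin dB) (Fin dB) ℂ}
    (hV : V ∈ unitaryGroup (Fin dB) ℂ) :
    margA (star (U ⊗ₖ V) * ρ * (U ⊗ₖ V)) = star U * margA ρ * U := by
  have hV' : ∀ i j, ∑ b, star (V i b) * V j b = if i = j then 1 else 0 := fun i j => by
    simpa [mul_apply, one_apply, mul_comm, eq_comm] using
      congrFun (congrFun (mem_unitaryGroup_iff.1 hV) j) i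
  ext a a'
  calc margA (star (U ⊗ₖ V) * ρ * (U ⊗ₖ V)) a a'
      = ∑ j, ∑ i, ∑ b, star (U i.1 a) * ρ i j * U j.1 a' * (star (V i.2 b) * V j.2 b) := by
        simp only [margA, mul_apply, star_apply, sum_mul]
        rw [sum_comm]
        refine sum_congr rfl fun j _ => ?_
        rw [sum_comm]
        refine sum_congr rfl fun i _ => sum_congr rfl fun b _ => ?_
        simp only [kroneckerMap_apply, star_mul']
        ring
    _ = ∑ j1, ∑ i1, ∑ b, star (U i1 a) * ρ (i1, b) (j1, b) * U j1 a' := by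
        simp_rw [← mul_sum, hV', mul_ite, mul_one, mul_zero, Fintype.sum_prod_type,
          sum_ite_eq', mem_univ, if_true]
        exact sum_congr rfl fun _ _ => sum_comm
    _ = (star U * margA ρ * U) a a' := by
        simp only [margA, mul_apply, star_apply, sum_mul, mul_sum]

lemma margB_conj_kronecker (ρ : Matrix (Fin dA × Fin dB) (Fin dA × Fin dB) ℂ)
    {U : Matrix (Fin dA) (Fin dA) ℂ} (hU : U ∈ unitaryGroup (Fin dA) ℂ)
    (V : Matrix (Fin dB) (Fin dB) ℂ) :
    margB (star (U ⊗ₖ V) * ρ * (U ⊗ₖ V)) = star V * margB ρ * V := by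
  have hswap : (U ⊗ₖ V).submatrix Prod.swap Prod.swap = V ⊗ₖ U := by
    ext
    simp [mul_comm]
  have hconj : (star (U ⊗ₖ V) * ρ * (U ⊗ₖ V)).submatrix Prod.swap Prod.swap =
      star (V ⊗ₖ U) * ρ.submatrix Prod.swap Prod.swap * (V ⊗ₖ U) := by
    rw [submatrix_mul _ _ _ Prod.swap _ Prod.swap_bijective,
      submatrix_mul _ _ _ Prod.swap _ Prod.swap_bijective, ← hswap]
    rfl
  rw [← margA_submatrix_swap, hconj, margA_conj_kronecker _ _ hU, margA_submatrix_swap]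

end Bipartite

section Audenaert

variable {dA dB : ℕ} {α : ℝ} {ρ : Matrix (Fin dA × Fin dB) (Fin dA × Fin dB) ℂ}

lemma exists_unitary_margA_margB_eq_diagonal (hA : (margA ρ).IsHermitian)
    (hB : (margB ρ).IsHermitian) :
    ∃ X ∈ unitaryGroup (Fin dA × Fin dB) ℂ,
      margA (star X * ρ * X) = diagonal (RCLike.ofReal ∘ hA.eigenvalues) ∧
      margB (star X * ρ * X) = diagonal (RCLike.ofReal ∘ hB.eigenvalues) := by
  have hU := hA.eigenvectorUnitary.2
  have hV := hB.eigenvectorUnitary.2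
  refine ⟨_, kronecker_mem_unitary hU hV, ?_, ?_⟩
  · rw [margA_conj_kronecker _ _ hV]
    simpa using hA.conjStarAlgAut_star_eigenvectorUnitary
  · rw [margB_conj_kronecker _ hU]
    simpa using hB.conjStarAlgAut_star_eigenvectorUnitary

lemma sum_re_apply_self_of_margA_eq_diagonal {lam : Fin dA → ℝ}
    (h : margA ρ = diagonal (RCLike.ofReal ∘ lam)) (a : Fin dA) :
    ∑ b, (ρ (a, b) (a, b)).re = lam a := by
  simpa [margA] using congrArg (fun M => (M a a).re) h

lemma sum_re_apply_self_of_margB_eq_diagonal {mu : Fin dB → ℝ}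
    (h : margB ρ = diagonal (RCLike.ofReal ∘ mu)) (b : Fin dB) :
    ∑ a, (ρ (a, b) (a, b)).re = mu b := by
  simpa [margB] using congrArg (fun M => (M b b).re) h

theorem rank_marg_eq_one_of_add_schattenNorm_eq (hα : 1 < α) (hρ : IsDensityMatrix ρ)
    (h : schattenNorm α (margA ρ) + schattenNorm α (margB ρ) = 1 + schattenNorm α ρ) :
    (margA ρ).rank = 1 ∨ (margB ρ).rank = 1 := by
  have hA := isDensityMatrix_margA hρ
  have hB := isDensityMatrix_margB hρ
  obtain ⟨X, hX, hτA, hτB⟩ := exists_unitary_margA_margB_eq_diagonal hA.1.1 hB.1.1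
  have hτ : (star X * ρ * X).PosSemidef := hρ.1.conjTranspose_mul_mul_same X
  set d : Fin dA × Fin dB → ℝ := fun p => ((star X * ρ * X) p p).re
  have hdA : ∀ a, ∑ b, d (a, b) = hA.1.1.eigenvalues a :=
    sum_re_apply_self_of_margA_eq_diagonal hτA
  have hdB : ∀ b, ∑ a, d (a, b) = hB.1.1.eigenvalues b :=
    sum_re_apply_self_of_margB_eq_diagonal hτB
  have hd : 0 ≤ d := fun p => (Complex.nonneg_iff.mp hτ.diag_nonneg).1
  have hd1 : ∑ p, d p = 1 := by
    rw [Fintype.sum_prod_type]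
    simp_rw [hdA]
    exact hA.sum_eigenvalues
  have hd_le : rpowNorm α d ≤ schattenNorm α ρ := by
    rw [← schattenNorm_eq_of_charpoly_eq hτ.1 hρ.1.1
      (charpoly_star_mul_mul_of_mem_unitaryGroup hX ρ), schattenNorm_eq_rpowNorm hτ.1]
    exact Real.rpow_le_rpow (sum_nonneg fun p _ => Real.rpow_nonneg (hd p) α)
      (hτ.sum_re_diag_rpow_le hα.le) (by positivity)
  have key := exists_marginal_eq_one_of_one_add_rpowNorm_le hα hd hd1 (by
    rw [funext hdA, funext hdB, ← schattenNorm_eq_rpowNorm, ← schattenNorm_eq_rpowNorm]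
    linarith)
  rw [hA.rank_eq_one_iff, hB.rank_eq_one_iff]
  simpa only [hdA, hdB] using key

lemma eq_diagonal_of_margA_apply_self_eq_zero {τ : Matrix (Fin dA × Fin dB) (Fin dA × Fin dB) ℂ}
    (hτ : τ.PosSemidef) {mu : Fin dB → ℝ} (hB : margB τ = diagonal (RCLike.ofReal ∘ mu))
    {a₀ : Fin dA} (hA : ∀ a ≠ a₀, margA τ a a = 0) :
    τ = diagonal (RCLike.ofReal ∘ fun p => if p.1 = a₀ then mu p.2 else 0) := by
  have hzero : ∀ p : Fin dA × Fin dB, p.1 ≠ a₀ → ∀ q, τ p q = 0 ∧ τ q p = 0 := by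
    rintro ⟨a, b⟩ ha q
    have hdiag : τ (a, b) (a, b) = 0 :=
      (sum_eq_zero_iff_of_nonneg fun b _ => hτ.diag_nonneg).mp (hA a ha) b (mem_univ b)
    have hcol := hτ.apply_eq_zero_of_apply_self_eq_zero hdiag q
    exact ⟨by rw [← hτ.1.apply, hcol, star_zero], hcol⟩
  have hblock : ∀ b b', τ (a₀, b) (a₀, b') = margB τ b b' :=
    fun b b' => (Fintype.sum_eq_single a₀ fun a ha => (hzero (a, b) ha (a, b')).1).symm
  ext ⟨a, b⟩ ⟨a', b'⟩
  by_cases ha : a = a₀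
  · by_cases ha' : a' = a₀
    · subst ha ha'
      rw [hblock, hB]
      simp [diagonal_apply]
    · rw [(hzero (a', b') ha' _).2]
      simp [ha, Ne.symm ha']
  · rw [(hzero (a, b) ha _).1]
    simp [diagonal_apply, ha]

theorem add_schattenNorm_eq_of_rank_margA_eq_one (hα : 1 < α) (hρ : IsDensityMatrix ρ)
    (hr : (margA ρ).rank = 1) :
    schattenNorm α (margA ρ) + schattenNorm α (margB ρ) = 1 + schattenNorm α ρ := by
  have hA := isDensityMatrix_margA hρ
  have hB := isDensityMatrix_margB hρ
  obtain ⟨a₀, ha₀⟩ := hA.rank_eq_one_iff.mp hr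
  have hlam : ∀ a ≠ a₀, hA.1.1.eigenvalues a = 0 := fun a ha =>
    eq_zero_of_apply_eq_sum hA.1.eigenvalues_nonneg (ha₀.trans hA.sum_eigenvalues.symm) ha
  obtain ⟨X, hX, hτA, hτB⟩ := exists_unitary_margA_margB_eq_diagonal hA.1.1 hB.1.1
  have hτpsd : (star X * ρ * X).PosSemidef := hρ.1.conjTranspose_mul_mul_same X
  have hτ := eq_diagonal_of_margA_apply_self_eq_zero hτpsd hτB (a₀ := a₀) fun a ha => by
    simp [hτA, hlam a ha]
  have hnormA : schattenNorm α (margA ρ) = 1 := by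
    rw [schattenNorm_eq_rpowNorm hA.1.1, rpowNorm, Fintype.sum_eq_single a₀ fun a ha => by
      rw [hlam a ha, Real.zero_rpow (by linarith)], ha₀, Real.one_rpow, Real.one_rpow]
  have hnormρ : schattenNorm α ρ = schattenNorm α (margB ρ) := by
    rw [schattenNorm_eq_rpowNorm_of_charpoly_eq_diagonal hρ.1.1
      (by rw [← charpoly_star_mul_mul_of_mem_unitaryGroup hX ρ, hτ]),
      schattenNorm_eq_rpowNorm hB.1.1, rpowNorm, rpowNorm, Fintype.sum_prod_type,
      Fintype.sum_eq_single a₀ fun a ha => by simp [ha, Real.zero_rpow (by linarith : α ≠ 0)]]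
    simp
  rw [hnormA, hnormρ]

end Audenaert

/-- Equality case in Audenaert's inequality: equality holds if and only if
one of the marginals is pure (has rank one). -/
theorem audenaert_equality_iff {dA dB : ℕ} (α : ℝ) (hα : 1 < α)
    (ρ : Matrix (Fin dA × Fin dB) (Fin dA × Fin dB) ℂ) (hρ : IsDensityMatrix ρ) :
    schattenNorm α (margA ρ) + schattenNorm α (margB ρ) = 1 + schattenNorm α ρ
      ↔ (margA ρ).rank = 1 ∨ (margB ρ).rank = 1 := by
  refine ⟨rank_marg_eq_one_of_add_schattenNorm_eq hα hρ, ?_⟩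
  rintro (hr | hr)
  · exact add_schattenNorm_eq_of_rank_margA_eq_one hα hρ hr
  · have hswap : schattenNorm α (ρ.submatrix Prod.swap Prod.swap) = schattenNorm α ρ :=
      schattenNorm_eq_of_charpoly_eq (hρ.1.1.submatrix _) hρ.1.1
        (charpoly_reindex (Equiv.prodComm _ _) ρ)
    have h := add_schattenNorm_eq_of_rank_margA_eq_one (ρ := ρ.submatrix Prod.swap Prod.swap) hα
      (hρ.submatrix_equiv (Equiv.prodComm _ _)) hr
    rw [margA_submatrix_swap, margB_submatrix_swap, hswap] at h
    linarith
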